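/- Truth Lemma for terms in the canonical model for existential formulas: for every world w of M^E and every term g of L_NES, the extended interpretation satisfies ρ^{E+}_w(g) = {m ∈ ℕ | g ∈ w(m)}. -/

import Mathlib

/-- Terms of the language L_NES: `g ::= A | K_i g | ¬g`. -/
inductive NesTerm (U I : Type) : Type
  | base : U → NesTerm U I
  | know : I → NesTerm U I → NesTerm U I
  | neg  : NesTerm U I → NesTerm U I

/-- Formulas of L_NES: `All g1 are g2` and `Some g1 is g2`. -/
inductive NesForm (U I : Type) : Type
  | all : NesTerm U I → NesTerm U I → NesForm U I
  | ex  : NesTerm U I → NesTerm U I → NesForm U I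

/-- The (defined) negation of an L_NES formula. -/
def NesForm.negf {U I : Type} : NesForm U I → NesForm U I
  | .all g1 g2 => .ex g1 (.neg g2)
  | .ex g1 g2 => .all g1 (.neg g2)

/-- Derivability in T_NES augmented with a set `extra` of additional axioms
(`extra = ∅` gives T_NES itself). -/
inductive NesDer {U I : Type} (extra : Set (NesForm U I)) :
    Set (NesForm U I) → NesForm U I → Prop
  | prem {Γ φ} : φ ∈ Γ → NesDer extra Γ φ
  | extraAx {Γ φ} : φ ∈ extra → NesDer extra Γ φ
  | allSelf {Γ} (g : NesTerm U I) : NesDer extra Γ (.all g g)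
  | tAx {Γ} (i : I) (g : NesTerm U I) : NesDer extra Γ (.all (.know i g) g)
  | dni {Γ} (g : NesTerm U I) : NesDer extra Γ (.all g (.neg (.neg g)))
  | dne {Γ} (g : NesTerm U I) : NesDer extra Γ (.all (.neg (.neg g)) g)
  | barbara {Γ g1 g2 g3} : NesDer extra Γ (.all g1 g2) → NesDer extra Γ (.all g2 g3) →
      NesDer extra Γ (.all g1 g3)
  | conv {Γ g1 g2} : NesDer extra Γ (.ex g1 g2) → NesDer extra Γ (.ex g2 g1)
  | exist {Γ g1 g2} : NesDer extra Γ (.ex g1 g2) → NesDer extra Γ (.ex g1 g1)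
  | nonEmpty {Γ g} : NesDer extra Γ (.all g (.neg g)) →
      NesDer extra Γ (.ex (.neg g) (.neg g))
  | raa {Γ φ ψ} : NesDer extra (insert φ Γ) ψ → NesDer extra (insert φ Γ) ψ.negf →
      NesDer extra Γ φ.negf
  | kRule {Γ g1 g2} (i : I) : NesDer extra (∅ : Set (NesForm U I)) (.all g1 g2) →
      NesDer extra Γ (.all (.know i g1) (.know i g2))

/-- Derivability in the system T_NES. -/
def TNes {U I : Type} : Set (NesForm U I) → NesForm U I → Prop := NesDer ∅

/-- The extra axioms of S4_NES: `All K_i g are K_i K_i g`. -/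
def S4Extra (U I : Type) : Set (NesForm U I) :=
  {φ | ∃ (i : I) (g : NesTerm U I), φ = .all (.know i g) (.know i (.know i g))}

/-- The extra axioms of S5_NES: those of S4_NES plus `All ¬K_i g are K_i ¬K_i g`. -/
def S5Extra (U I : Type) : Set (NesForm U I) :=
  S4Extra U I ∪ {φ | ∃ (i : I) (g : NesTerm U I),
    φ = .all (.neg (.know i g)) (.know i (.neg (.know i g)))}

/-- Derivability in the system S4_NES. -/
def S4Nes {U I : Type} : Set (NesForm U I) → NesForm U I → Prop := NesDer (S4Extra U I)

/-- Derivability in the system S5_NES. -/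
def S5Nes {U I : Type} : Set (NesForm U I) → NesForm U I → Prop := NesDer (S5Extra U I)

/-- A first-order Kripke model for L_NES with constant (nonempty) domain. -/
structure NesModel (U I : Type) where
  W : Type
  R : I → W → W → Prop
  D : Type
  dNonempty : Nonempty D
  val : W → U → Set D

/-- Interpretation of terms: `ρ⁺_w(A) = ρ_w(A)`, `ρ⁺_w(¬g) = D − ρ⁺_w(g)`,
`ρ⁺_w(K_i g) = ⋂_{w R_i v} ρ⁺_v(g)`. -/
def NesModel.interp {U I : Type} (M : NesModel U I) : M.W → NesTerm U I → Set M.D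
  | w, .base A => M.val w A
  | w, .know i g => {d | ∀ v, M.R i w v → d ∈ NesModel.interp M v g}
  | w, .neg g => (NesModel.interp M w g)ᶜ

/-- Satisfaction of L_NES formulas at a pointed model. -/
def NesModel.sat {U I : Type} (M : NesModel U I) (w : M.W) : NesForm U I → Prop
  | .all g1 g2 => M.interp w g1 ⊆ M.interp w g2
  | .ex g1 g2 => (M.interp w g1 ∩ M.interp w g2).Nonempty

/-- A pointed model satisfies a set of formulas. -/
def NesModel.satSet {U I : Type} (M : NesModel U I) (w : M.W)
    (Γ : Set (NesForm U I)) : Prop :=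
  ∀ φ ∈ Γ, M.sat w φ

/-- T models: every accessibility relation is reflexive. -/
def NesModel.IsT {U I : Type} (M : NesModel U I) : Prop := ∀ i, Reflexive (M.R i)

/-- S4 models: every accessibility relation is reflexive and transitive. -/
def NesModel.IsS4 {U I : Type} (M : NesModel U I) : Prop :=
  ∀ i, Reflexive (M.R i) ∧ Transitive (M.R i)

/-- S5 models: every accessibility relation is an equivalence relation. -/
def NesModel.IsS5 {U I : Type} (M : NesModel U I) : Prop := ∀ i, Equivalence (M.R i)

/-- A type: a set X of terms that respects provable Barbara, and contains exactly
one of g, ¬g for every term g. -/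
def IsType {U I : Type} (X : Set (NesTerm U I)) : Prop :=
  (∀ g1 g2 : NesTerm U I, g1 ∈ X → TNes (∅ : Set (NesForm U I)) (.all g1 g2) → g2 ∈ X) ∧
  (∀ g : NesTerm U I, g ∈ X ∨ NesTerm.neg g ∈ X) ∧
  (∀ g : NesTerm U I, ¬ (g ∈ X ∧ NesTerm.neg g ∈ X))

/-- A possible collection of terms: no two members provably exclude each other. -/
def IsPossible {U I : Type} (Y : Set (NesTerm U I)) : Prop :=
  ∀ g1 g2 : NesTerm U I, g1 ∈ Y → g2 ∈ Y →
    ¬ TNes (∅ : Set (NesForm U I)) (.all g1 (.neg g2))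

/-- Worlds of the canonical model for existential formulas: maps from ℕ to types. -/
def WE (U I : Type) : Type := ℕ → {X : Set (NesTerm U I) // IsType X}

/-- Accessibility in the canonical model for existential formulas:
w R^E_i w' iff K_i g ∈ w(n) implies g ∈ w'(n), for all n and g. -/
def RE {U I : Type} (i : I) (w w' : WE U I) : Prop :=
  ∀ (n : ℕ) (g : NesTerm U I), NesTerm.know i g ∈ (w n).1 → g ∈ (w' n).1

/-- The extended interpretation ρ^{E+} of terms in the canonical model
for existential formulas (with domain ℕ). -/
def interpE {U I : Type} : WE U I → NesTerm U I → Set ℕ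
  | w, .base A => {n | NesTerm.base A ∈ (w n).1}
  | w, .know i g => {n | ∀ w' : WE U I, RE i w w' → n ∈ interpE w' g}
  | w, .neg g => (interpE w g)ᶜ

section Aux

variable {U I : Type}

/-- Weakening of contexts. -/
lemma NesDer.weaken {extra Γ Γ' : Set (NesForm U I)} {φ} (h : NesDer extra Γ φ)
    (hs : Γ ⊆ Γ') : NesDer extra Γ' φ := by
  induction h generalizing Γ' with
  | prem h => exact .prem (hs h)
  | extraAx h => exact .extraAx h
  | allSelf g => exact .allSelf g
  | tAx i g => exact .tAx i g
  | dni g => exact .dni g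
  | dne g => exact .dne g
  | barbara h1 h2 ih1 ih2 => exact .barbara (ih1 hs) (ih2 hs)
  | conv h ih => exact .conv (ih hs)
  | exist h ih => exact .exist (ih hs)
  | nonEmpty h ih => exact .nonEmpty (ih hs)
  | raa h1 h2 ih1 ih2 =>
      exact .raa (ih1 (Set.insert_subset_insert hs)) (ih2 (Set.insert_subset_insert hs))
  | kRule i h ih => exact .kRule i h

/-- Contraposition is derivable. -/
lemma nes_contra {a b : NesTerm U I}
    (h : TNes (∅ : Set (NesForm U I)) (.all a b)) :
    TNes (∅ : Set (NesForm U I)) (.all (.neg b) (.neg a)) := by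
  have h1 : NesDer (∅ : Set (NesForm U I)) (insert (NesForm.ex (.neg b) a) ∅) (.all a b) :=
    NesDer.weaken h (by intro x hx; exact absurd hx (Set.notMem_empty x))
  have h2 : NesDer (∅ : Set (NesForm U I)) (insert (NesForm.ex (.neg b) a) ∅)
      (NesForm.negf (.all a b)) :=
    NesDer.conv (.prem (Set.mem_insert _ _))
  exact NesDer.raa h1 h2

/-- From `All c x` and `All c ¬x`, infer `All c ¬c`. -/
lemma nes_combine {c x : NesTerm U I}
    (h1 : TNes (∅ : Set (NesForm U I)) (.all c x))
    (h2 : TNes (∅ : Set (NesForm U I)) (.all c (.neg x))) :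
    TNes (∅ : Set (NesForm U I)) (.all c (.neg c)) :=
  NesDer.barbara (NesDer.barbara h1 (NesDer.dni x)) (nes_contra h2)

lemma sat_negf_conflict (M : NesModel U I) (w : M.W) (φ : NesForm U I)
    (h1 : M.sat w φ) (h2 : M.sat w φ.negf) : False := by
  cases φ with
  | all g1 g2 =>
      obtain ⟨d, hd1, hd2⟩ := h2
      exact hd2 (h1 hd1)
  | ex g1 g2 =>
      obtain ⟨d, hd1, hd2⟩ := h1
      exact (h2 hd1) hd2

lemma sat_of_not_negf (M : NesModel U I) (w : M.W) (φ : NesForm U I)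
    (h : ¬ M.sat w φ.negf) : M.sat w φ := by
  cases φ with
  | all g1 g2 =>
      intro d hd
      by_contra hc
      exact h ⟨d, hd, hc⟩
  | ex g1 g2 =>
      by_contra hc
      apply h
      intro d hd hdc
      exact hc ⟨d, hd, hdc⟩

/-- Soundness of T_NES over reflexive models. -/
lemma nes_sound {Γ : Set (NesForm U I)} {φ}
    (h : NesDer (∅ : Set (NesForm U I)) Γ φ) (M : NesModel U I)
    (hrefl : ∀ i, Reflexive (M.R i)) :
    ∀ w, M.satSet w Γ → M.sat w φ := by
  induction h with
  | prem hφ => intro w hΓ; exact hΓ _ hφ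
  | extraAx hφ => exact absurd hφ (Set.notMem_empty _)
  | allSelf g => intro w _ d hd; exact hd
  | tAx i g => intro w _ d hd; exact hd w (hrefl i w)
  | dni g =>
      intro w _ d hd
      show d ∈ ((M.interp w g)ᶜ)ᶜ
      simpa using hd
  | dne g =>
      intro w _ d hd
      have : d ∈ ((M.interp w g)ᶜ)ᶜ := hd
      simpa using this
  | barbara h1 h2 ih1 ih2 =>
      intro w hΓ
      exact Set.Subset.trans (ih1 w hΓ) (ih2 w hΓ)
  | conv h ih =>
      intro w hΓ
      obtain ⟨d, hd1, hd2⟩ := ih w hΓ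
      exact ⟨d, hd2, hd1⟩
  | exist h ih =>
      intro w hΓ
      obtain ⟨d, hd1, _⟩ := ih w hΓ
      exact ⟨d, hd1, hd1⟩
  | nonEmpty h ih =>
      intro w hΓ
      obtain ⟨d⟩ := M.dNonempty
      have hsub := ih w hΓ
      exact ⟨d, fun hmem => hsub hmem hmem, fun hmem => hsub hmem hmem⟩
  | raa h1 h2 ih1 ih2 =>
      rename_i Γ' φ' ψ'
      intro w hΓ
      by_contra hc
      have hφ := sat_of_not_negf M w _ hc
      have hins : M.satSet w (insert φ' Γ') := by
        intro χ hχ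
        rcases hχ with hχ | hχ
        · exact hχ ▸ hφ
        · exact hΓ _ hχ
      exact sat_negf_conflict M w _ (ih1 w hins) (ih2 w hins)
  | kRule i h ih =>
      intro w _ d hd v hv
      exact ih v (fun χ hχ => absurd hχ (Set.notMem_empty χ)) (hd v hv)

/-- The negation-parity of a term. -/
def nesParity {U I : Type} : NesTerm U I → Bool
  | .base _ => false
  | .know _ g => nesParity g
  | .neg g => !nesParity g

/-- The constant model with base valuation `S`. -/
def nesConstModel (U I : Type) (S : Set ℕ) : NesModel U I :=
  ⟨Unit, fun _ _ _ => True, ℕ, ⟨0⟩, fun _ _ => S⟩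

lemma interp_const_bot (t : NesTerm U I) (w : Unit) :
    (nesConstModel U I ∅).interp w t = (if nesParity t then Set.univ else ∅) := by
  induction t generalizing w with
  | base A => simp [NesModel.interp, nesParity, nesConstModel]; rfl
  | know i g ih =>
      ext d
      simp only [NesModel.interp, Set.mem_setOf_eq]
      constructor
      · intro hd
        have := hd () trivial
        rw [ih ()] at this
        cases hp : nesParity g <;> simp [nesParity, hp] at this ⊢ <;> try exact this
      · intro hd v _
        rw [ih v]
        cases hp : nesParity g <;> simp [nesParity, hp] at hd ⊢ <;> try exact hd
  | neg g ih =>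
      show ((nesConstModel U I ∅).interp w g)ᶜ = _
      rw [ih w]
      cases hp : nesParity g <;> simp [nesParity, hp]

lemma interp_const_top (t : NesTerm U I) (w : Unit) :
    (nesConstModel U I Set.univ).interp w t = (if nesParity t then ∅ else Set.univ) := by
  induction t generalizing w with
  | base A => simp [NesModel.interp, nesParity, nesConstModel]
  | know i g ih =>
      ext d
      simp only [NesModel.interp, Set.mem_setOf_eq]
      constructor
      · intro hd
        have := hd () trivial
        rw [ih ()] at this
        cases hp : nesParity g <;> simp [nesParity, hp] at this ⊢ <;> try exact this
      · intro hd v _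
        rw [ih v]
        cases hp : nesParity g <;> simp [nesParity, hp] at hd ⊢ <;> try exact hd
  | neg g ih =>
      show ((nesConstModel U I Set.univ).interp w g)ᶜ = _
      rw [ih w]
      cases hp : nesParity g <;> simp [nesParity, hp]

/-- `All ¬g are g` is never a theorem. -/
lemma not_all_neg_self (g : NesTerm U I) :
    ¬ TNes (∅ : Set (NesForm U I)) (.all (.neg g) g) := by
  intro h
  cases hp : nesParity g with
  | false =>
      have hs := nes_sound h (nesConstModel U I ∅) (fun i x => trivial) ()
        (fun χ hχ => absurd hχ (Set.notMem_empty χ))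
      have h0 : (0 : ℕ) ∈ (nesConstModel U I ∅).interp () (NesTerm.neg g) := by
        show (0 : ℕ) ∈ ((nesConstModel U I ∅).interp () g)ᶜ
        rw [interp_const_bot g ()]
        simp [hp]
        exact Set.mem_univ _
      have := hs h0
      rw [interp_const_bot g ()] at this
      simp [hp] at this
      exact Set.notMem_empty _ this
  | true =>
      have hs := nes_sound h (nesConstModel U I Set.univ) (fun i x => trivial) ()
        (fun χ hχ => absurd hχ (Set.notMem_empty χ))
      have h0 : (0 : ℕ) ∈ (nesConstModel U I Set.univ).interp () (NesTerm.neg g) := by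
        show (0 : ℕ) ∈ ((nesConstModel U I Set.univ).interp () g)ᶜ
        rw [interp_const_top g ()]
        simp [hp]
        exact Set.mem_univ _
      have := hs h0
      rw [interp_const_top g ()] at this
      simp [hp] at this
      exact Set.notMem_empty _ this

end Aux
section Lindenbaum

variable {U I : Type}

/-- Lindenbaum-style lemma: every possible set extends to a type. -/
lemma exists_type_extension {Y : Set (NesTerm U I)} (hY : IsPossible Y) :
    ∃ X, IsType X ∧ Y ⊆ X := by
  obtain ⟨Z, hsub, hmax⟩ := zorn_subset_nonempty {Z : Set (NesTerm U I) | IsPossible Z}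
    (fun c hcS hchain hcne => by
      refine ⟨⋃₀ c, ?_, fun s hs => Set.subset_sUnion_of_mem hs⟩
      intro g1 g2 hg1 hg2 hder
      obtain ⟨s1, hs1, hg1⟩ := hg1
      obtain ⟨s2, hs2, hg2⟩ := hg2
      rcases hchain.total hs1 hs2 with hle | hle
      · exact hcS hs2 g1 g2 (hle hg1) hg2 hder
      · exact hcS hs1 g1 g2 hg1 (hle hg2) hder) Y hY
  have hZ : IsPossible Z := hmax.prop
  have hmaxmem : ∀ {W : Set (NesTerm U I)}, IsPossible W → Z ⊆ W → W ⊆ Z :=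
    fun hW hle => hmax.2 hW hle
  refine ⟨Z, ⟨?_, ?_, ?_⟩, hsub⟩
  · -- closure under derivable All
    intro g1 g2 hg1 hder
    have hposs : IsPossible (insert g2 Z) := by
      intro a b ha hb hab
      rcases Set.mem_insert_iff.mp ha with h1 | h1 <;>
        rcases Set.mem_insert_iff.mp hb with h2 | h2
      · rw [h1, h2] at hab
        exact hZ g1 g1 hg1 hg1 (nes_combine hder (NesDer.barbara hder hab))
      · rw [h1] at hab
        exact hZ g1 b hg1 h2 (NesDer.barbara hder hab)
      · rw [h2] at hab
        exact hZ a g1 h1 hg1 (NesDer.barbara hab (nes_contra hder))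
      · exact hZ a b h1 h2 hab
    exact hmaxmem hposs (Set.subset_insert _ _) (Set.mem_insert _ _)
  · -- completeness
    intro g
    by_contra hc
    push_neg at hc
    obtain ⟨hg, hng⟩ := hc
    have h1 : ¬ IsPossible (insert g Z) := fun hp =>
      hg (hmaxmem hp (Set.subset_insert _ _) (Set.mem_insert _ _))
    have h2 : ¬ IsPossible (insert (NesTerm.neg g) Z) := fun hp =>
      hng (hmaxmem hp (Set.subset_insert _ _) (Set.mem_insert _ _))
    unfold IsPossible at h1 h2
    push_neg at h1 h2
    obtain ⟨a, b, ha, hb, hab⟩ := h1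
    obtain ⟨c, d, hcmem, hdmem, hcd⟩ := h2
    have P1 : (∃ a ∈ Z, TNes (∅ : Set (NesForm U I)) (.all a (.neg g))) ∨
        TNes (∅ : Set (NesForm U I)) (.all g (.neg g)) := by
      rcases Set.mem_insert_iff.mp ha with h1 | h1 <;>
        rcases Set.mem_insert_iff.mp hb with h2 | h2
      · rw [h1, h2] at hab; exact Or.inr hab
      · rw [h1] at hab
        exact Or.inl ⟨b, h2, NesDer.barbara (NesDer.dni b) (nes_contra hab)⟩
      · rw [h2] at hab; exact Or.inl ⟨a, h1, hab⟩
      · exact absurd hab (hZ a b h1 h2)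
    have P2 : (∃ c ∈ Z, TNes (∅ : Set (NesForm U I)) (.all c (.neg (.neg g)))) ∨
        TNes (∅ : Set (NesForm U I)) (.all (.neg g) (.neg (.neg g))) := by
      rcases Set.mem_insert_iff.mp hcmem with h1 | h1 <;>
        rcases Set.mem_insert_iff.mp hdmem with h2 | h2
      · rw [h1, h2] at hcd; exact Or.inr hcd
      · rw [h1] at hcd
        exact Or.inl ⟨d, h2, NesDer.barbara (NesDer.dni d) (nes_contra hcd)⟩
      · rw [h2] at hcd; exact Or.inl ⟨c, h1, hcd⟩
      · exact absurd hcd (hZ c d h1 h2)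
    rcases P1 with ⟨a', ha', hder1⟩ | hthm1 <;>
      rcases P2 with ⟨c', hc', hder2⟩ | hthm2
    · -- All a' ¬g and All c' ¬¬g : derive All c' ¬a'
      exact hZ c' a' hc' ha' (NesDer.barbara hder2 (nes_contra hder1))
    · -- All ¬g ¬¬g gives All ¬g g: impossible
      exact not_all_neg_self g (NesDer.barbara hthm2 (NesDer.dne g))
    · -- All g ¬g and All c' ¬¬g
      have hcg : TNes (∅ : Set (NesForm U I)) (.all c' g) :=
        NesDer.barbara hder2 (NesDer.dne g)
      have hcng : TNes (∅ : Set (NesForm U I)) (.all c' (.neg g)) :=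
        NesDer.barbara hcg hthm1
      exact hZ c' c' hc' hc' (nes_combine hcg hcng)
    · exact not_all_neg_self g (NesDer.barbara hthm2 (NesDer.dne g))
  · intro g ⟨h1, h2⟩
    exact hZ g (NesTerm.neg g) h1 h2 (NesDer.dni g)

end Lindenbaum
/-- Truth Lemma for terms: ρ^{E+}_w(g) = {m | g ∈ w(m)}. -/
theorem truth_lemma_terms_E (U I : Type) [Countable U]
    (w : WE U I) (g : NesTerm U I) :
    interpE w g = {m : ℕ | g ∈ (w m).1} := by
  induction g generalizing w with
  | base A => rfl
  | neg g ih =>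
      ext m
      show m ∈ (interpE w g)ᶜ ↔ NesTerm.neg g ∈ (w m).1
      rw [Set.mem_compl_iff, ih w]
      constructor
      · intro h
        rcases (w m).2.2.1 g with hg | hg
        · exact absurd hg h
        · exact hg
      · intro h hg
        exact (w m).2.2.2 g ⟨hg, h⟩
  | know i g ih =>
      ext n
      show (∀ w' : WE U I, RE i w w' → n ∈ interpE w' g) ↔ NesTerm.know i g ∈ (w n).1
      constructor
      · intro h
        by_contra hKg
        -- the sets of terms forced by knowledge at each coordinate
        set Y : ℕ → Set (NesTerm U I) :=
          fun m => if m = n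
            then {t | NesTerm.know i t ∈ (w m).1} ∪ {NesTerm.neg g}
            else {t | NesTerm.know i t ∈ (w m).1} with hYdef
        have possBase : ∀ m, IsPossible {t | NesTerm.know i t ∈ (w m).1} := by
          intro m h1 h2 hh1 hh2 hder
          have d2 : TNes (∅ : Set (NesForm U I)) (.all (.know i h1) (.neg h2)) :=
            NesDer.barbara (NesDer.kRule i hder) (NesDer.tAx i (.neg h2))
          have hmem1 : NesTerm.neg h2 ∈ (w m).1 := (w m).2.1 _ _ hh1 d2
          have hmem2 : h2 ∈ (w m).1 := (w m).2.1 _ _ hh2 (NesDer.tAx i h2)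
          exact (w m).2.2.2 h2 ⟨hmem2, hmem1⟩
        have possY : ∀ m, IsPossible (Y m) := by
          intro m
          rw [hYdef]
          by_cases hm : m = n
          · simp only [if_pos hm]
            subst hm
            intro h1 h2 hh1 hh2 hder
            rcases hh1 with hh1 | hh1 <;> rcases hh2 with hh2 | hh2
            · exact possBase m h1 h2 hh1 hh2 hder
            · rw [Set.mem_singleton_iff] at hh2
              rw [hh2] at hder
              have dg : TNes (∅ : Set (NesForm U I)) (.all h1 g) :=
                NesDer.barbara hder (NesDer.dne g)
              exact hKg ((w m).2.1 _ _ hh1 (NesDer.kRule i dg))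
            · rw [Set.mem_singleton_iff] at hh1
              rw [hh1] at hder
              have dg : TNes (∅ : Set (NesForm U I)) (.all h2 g) :=
                NesDer.barbara (NesDer.dni h2)
                  (NesDer.barbara (nes_contra hder) (NesDer.dne g))
              exact hKg ((w m).2.1 _ _ hh2 (NesDer.kRule i dg))
            · rw [Set.mem_singleton_iff] at hh1 hh2
              rw [hh1, hh2] at hder
              exact not_all_neg_self g (NesDer.barbara hder (NesDer.dne g))
          · simp only [if_neg hm]
            exact possBase m
        choose X hX hXsub using fun m => exists_type_extension (possY m)
        let w' : WE U I := fun m => ⟨X m, hX m⟩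
        have hRE : RE i w w' := by
          intro m t ht
          show t ∈ X m
          apply hXsub m
          rw [hYdef]
          by_cases hm : m = n
          · simp only [if_pos hm]
            exact Or.inl ht
          · simp only [if_neg hm]
            exact ht
        have hgmem : n ∈ interpE w' g := h w' hRE
        rw [ih w'] at hgmem
        have hng : NesTerm.neg g ∈ (w' n).1 := by
          apply hXsub n
          rw [hYdef]
          simp only [if_pos rfl]
          exact Or.inr rfl
        exact (w' n).2.2.2 g ⟨hgmem, hng⟩
      · intro hmem w' hw'
        rw [ih w']
        exact hw' n g hmem
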